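/- arXiv:1706.05654 — 6 statements merged into one kernel-verified Lean document; each statement's English description precedes it below -/
import Mathlib

section
/- If $x_1, \ldots, x_n$ are self-adjoint elements of a C*-algebra that pairwise anti-commute (i.e., $x_i x_j + x_j x_i = 0$ for $i \neq j$), then $\|x_1 + \cdots + x_n\| = \sqrt{\|x_1^2 + \cdots + x_n^2\|} \leq \sqrt{\|x_1\|^2 + \cdots + \|x_n\|^2}$. -/
/-- **Anti-commuting sums in a C*-algebra.**
If `x 1, …, x n` are self-adjoint elements of a C*-algebra that pairwise anti-commute,
then `‖x 1 + ⋯ + x n‖ = √‖x 1 ^ 2 + ⋯ + x n ^ 2‖ ≤ √(‖x 1‖ ^ 2 + ⋯ + ‖x n‖ ^ 2)`. -/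
theorem anticommuting_sum_norm {A : Type*} [NormedRing A] [StarRing A] [CStarRing A]
    {n : ℕ} (x : Fin n → A)
    (hsa : ∀ i, IsSelfAdjoint (x i))
    (hanti : ∀ i j, i ≠ j → x i * x j + x j * x i = 0) :
    ‖∑ i, x i‖ = Real.sqrt ‖∑ i, (x i) ^ 2‖ ∧
      Real.sqrt ‖∑ i, (x i) ^ 2‖ ≤ Real.sqrt (∑ i, ‖x i‖ ^ 2) := by
  have hoff : ∑ p ∈ (Finset.univ : Finset (Fin n)).offDiag, x p.1 * x p.2 = 0 := by
    refine Finset.sum_involution (fun p _ => Prod.swap p) ?_ ?_ ?_ ?_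
    · rintro ⟨i, j⟩ hp
      simp only [Finset.mem_offDiag] at hp
      exact hanti i j hp.2.2
    · rintro ⟨i, j⟩ hp _
      simp only [Finset.mem_offDiag] at hp
      simp [Prod.ext_iff]
      exact fun h => absurd h.symm hp.2.2
    · rintro ⟨i, j⟩ hp
      simp only [Finset.mem_offDiag] at hp ⊢
      exact ⟨hp.2.1, hp.1, (Ne.symm hp.2.2)⟩
    · rintro ⟨i, j⟩ _
      rfl
  have hsq : (∑ i, x i) ^ 2 = ∑ i, (x i) ^ 2 := by
    rw [sq, Finset.sum_mul_sum, ← Finset.sum_product']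
    rw [← Finset.diag_union_offDiag (Finset.univ : Finset (Fin n)),
      Finset.sum_union (Finset.disjoint_diag_offDiag _), hoff, add_zero,
      Finset.sum_diag]
    simp [sq]
  have hs : IsSelfAdjoint (∑ i, x i) := by
    simpa [IsSelfAdjoint] using Finset.sum_congr rfl (fun i _ => hsa i)
  have hnorm : ‖(∑ i, x i) ^ 2‖ = ‖∑ i, x i‖ ^ 2 := by
    rw [sq, sq, ← CStarRing.norm_star_mul_self, hs.star_eq]
  constructor
  · rw [← hsq, hnorm, Real.sqrt_sq (norm_nonneg _)]
  · apply Real.sqrt_le_sqrt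
    calc ‖∑ i, (x i) ^ 2‖ ≤ ∑ i, ‖(x i) ^ 2‖ := norm_sum_le _ _
      _ = ∑ i, ‖x i‖ ^ 2 := by
          refine Finset.sum_congr rfl fun i _ => ?_
          rw [sq, sq, ← CStarRing.norm_star_mul_self, (hsa i).star_eq]
end

section
/- If $Y_1, \ldots, Y_d$ are self-adjoint bounded operators on a Hilbert space such that for every choice of signs $\epsilon \in \{-1,1\}^d$ one has $-I \leq \epsilon_1 Y_1 + \cdots + \epsilon_d Y_d \leq I$, then $0 \leq Y_1^2 + \cdots + Y_d^2 \leq I$. -/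
/-!
Squaring `-1 ≤ ∑ i, ε i • Y i ≤ 1` gives `(∑ i, ε i • Y i) ^ 2 ≤ 1` by the functional calculus,
since `x ^ 2 ≤ 1` on the spectrum `⊆ [-1, 1]`. Summing over all `2 ^ d` sign vectors `ε`, the cross
terms `ε i ε j Y i Y j` with `i ≠ j` cancel, leaving `2 ^ d • ∑ i, Y i ^ 2 ≤ 2 ^ d • 1`.
-/

section CFC

variable {A : Type*} [TopologicalSpace A] [Ring A] [StarRing A] [PartialOrder A]
  [StarOrderedRing A] [Algebra ℝ A] [ContinuousFunctionalCalculus ℝ A IsSelfAdjoint]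
  [NonnegSpectrumClass ℝ A]

lemma IsSelfAdjoint.sq_le_one {a : A} (ha : IsSelfAdjoint a) (h₁ : -1 ≤ a) (h₂ : a ≤ 1) :
    a ^ 2 ≤ 1 := by
  have h_ge : ∀ x ∈ spectrum ℝ a, -1 ≤ x := by
    simpa using (algebraMap_le_iff_le_spectrum (r := (-1 : ℝ)) (a := a)).mp (by simpa using h₁)
  have h_le : ∀ x ∈ spectrum ℝ a, x ≤ 1 := (CFC.le_one_iff (R := ℝ) a).mp h₂
  rw [← cfc_pow_id (R := ℝ) a 2]
  exact cfc_le_one _ a fun x hx => by nlinarith [h_ge x hx, h_le x hx]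

end CFC

section Signs

variable {ι : Type*} [Fintype ι] [DecidableEq ι]

lemma sum_units_mul_units (i j : ι) :
    ∑ ε : ι → ℤˣ, ((ε i * ε j : ℤˣ) : ℤ) = if i = j then 2 ^ Fintype.card ι else 0 := by
  split_ifs with hij
  · subst hij
    simp [Int.units_mul_self, Fintype.card_units_int]
  · -- flipping the sign of `ε i` is a bijection that negates every summand
    have h := Fintype.sum_equiv (Equiv.mulRight (Pi.mulSingle i (-1)))
      (fun ε : ι → ℤˣ => ((ε i * ε j : ℤˣ) : ℤ))
      (fun ε => -((ε i * ε j : ℤˣ) : ℤ)) fun ε => by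
        simp [Pi.mulSingle_eq_of_ne' hij]
    rw [Finset.sum_neg_distrib] at h
    linarith

lemma sum_sq_signed_sum {R : Type*} [Ring R] (Y : ι → R) :
    ∑ ε : ι → ℤˣ, (∑ i, (ε i : ℤ) • Y i) ^ 2 = (2 ^ Fintype.card ι : ℤ) • ∑ i, Y i ^ 2 := by
  calc ∑ ε : ι → ℤˣ, (∑ i, (ε i : ℤ) • Y i) ^ 2
      = ∑ ε : ι → ℤˣ, ∑ i, ∑ j, ((ε i * ε j : ℤˣ) : ℤ) • (Y i * Y j) := by
        simp only [sq, Finset.sum_mul_sum, smul_mul_smul_comm, Units.val_mul]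
    _ = ∑ i, ∑ j, (∑ ε : ι → ℤˣ, ((ε i * ε j : ℤˣ) : ℤ)) • (Y i * Y j) := by
        simp only [Finset.sum_smul]
        rw [Finset.sum_comm]
        exact Finset.sum_congr rfl fun i _ => Finset.sum_comm
    _ = (2 ^ Fintype.card ι : ℤ) • ∑ i, Y i ^ 2 := by
        simp only [sum_units_mul_units, ite_smul, zero_smul, Finset.sum_ite_eq, Finset.mem_univ,
          if_true, Finset.smul_sum, sq]

lemma sum_sq_le_one_of_signed_sum_sq_le_one {R : Type*} [Ring R] [StarRing R] [PartialOrder R]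
    [StarOrderedRing R] [Algebra ℝ R] [StarModule ℝ R] {Y : ι → R}
    (h : ∀ ε : ι → ℤˣ, (∑ i, (ε i : ℤ) • Y i) ^ 2 ≤ 1) : ∑ i, Y i ^ 2 ≤ 1 := by
  have h_sum := Finset.sum_le_sum fun ε (_ : ε ∈ Finset.univ) => h ε
  rw [sum_sq_signed_sum, Finset.sum_const, Finset.card_univ, Fintype.card_fun,
    Fintype.card_units_int, ← Int.cast_smul_eq_zsmul ℝ, ← Nat.cast_smul_eq_nsmul ℝ] at h_sum
  push_cast at h_sum
  exact (smul_le_smul_iff_of_pos_left (by positivity)).mp h_sum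

end Signs

/-- If `Y 1, …, Y d` are self-adjoint bounded operators on a complex Hilbert space such that
for every choice of signs `ε ∈ {-1,1}^d` one has `-I ≤ ε 1 • Y 1 + ⋯ + ε d • Y d ≤ I`
(i.e., the joint numerical range lies in the `ℓ¹` unit ball), then
`0 ≤ Y 1 ^ 2 + ⋯ + Y d ^ 2 ≤ I`. -/
theorem sum_sq_le_one_of_signed_sums_le_one
    {H : Type*} [NormedAddCommGroup H] [InnerProductSpace ℂ H] [CompleteSpace H]
    {d : ℕ} (Y : Fin d → H →L[ℂ] H)
    (hsa : ∀ i, IsSelfAdjoint (Y i))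
    (hsign : ∀ ε : Fin d → ℝ, (∀ i, ε i = 1 ∨ ε i = -1) →
      -(1 : H →L[ℂ] H) ≤ ∑ i, (ε i : ℂ) • Y i ∧ ∑ i, (ε i : ℂ) • Y i ≤ 1) :
    (0 : H →L[ℂ] H) ≤ ∑ i, (Y i) ^ 2 ∧ ∑ i, (Y i) ^ 2 ≤ 1 := by
  refine ⟨Finset.sum_nonneg fun i _ => (hsa i).sq_nonneg,
    sum_sq_le_one_of_signed_sum_sq_le_one fun ε => ?_⟩
  have h_sa : IsSelfAdjoint (∑ i, (ε i : ℤ) • Y i) :=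
    isSelfAdjoint_sum _ fun i _ => (IsSelfAdjoint.all _).smul (hsa i)
  obtain ⟨h₁, h₂⟩ := hsign (fun i => (ε i : ℤ)) fun i => by
    rcases Int.units_eq_one_or (ε i) with h | h <;> simp [h]
  simp only [Complex.ofReal_intCast, Int.cast_smul_eq_zsmul] at h₁ h₂
  exact h_sa.sq_le_one h₁ h₂
end

section
/- Let $F_1, \ldots, F_d$ be the $2^{d-1} \times 2^{d-1}$ anti-commuting self-adjoint unitary matrices defined recursively by $F_1^{[1]}=1$, $F_j^{[d]} = \sigma_x \otimes F_j^{[d-1]}$ for $j < d$, and $F_d^{[d]} = \sigma_z \otimes I$. Then the self-adjoint matrix $\sum_{j=1}^d F_j \otimes F_j$ has $d$ as an eigenvalue; in particular $\|\sum_{j=1}^d F_j \otimes F_j\| = d$. -/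
/-!
The vectorised identity `vec 1 = ∑ᵢ eᵢ ⊗ eᵢ` satisfies `(A ⊗ A) (vec 1) = vec (A Aᵀ)`, so it is
fixed by `A ⊗ A` whenever `A Aᵀ = 1`. Each `F j` is real symmetric and squares to `1`, hence
`vec 1` is an eigenvector of `∑ j, F j ⊗ F j` with eigenvalue `d`, which bounds the operator
norm from below. Each `F j ⊗ F j` is unitary, so the triangle inequality bounds it by `d`.
-/

open Matrix Kronecker

noncomputable def pauliX : Matrix (Fin 2) (Fin 2) ℂ := !![0, 1; 1, 0]
noncomputable def pauliZ : Matrix (Fin 2) (Fin 2) ℂ := !![1, 0; 0, -1]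

/-- The recursively defined matrices `F j ^ [d]` of size `2 ^ (d-1)`:
`F 1 ^ [1] = 1`, `F j ^ [d] = σₓ ⊗ F j ^ [d-1]` for `j < d`, and `F d ^ [d] = σ_z ⊗ I`. -/
noncomputable def Fmat : (d : ℕ) → Fin d → Matrix (Fin (2 ^ (d - 1))) (Fin (2 ^ (d - 1))) ℂ
  | 0 => fun j => j.elim0
  | 1 => fun _ => 1
  | (d + 2) => fun j =>
    if h : (j : ℕ) < d + 1 then
      Matrix.reindex
        (finProdFinEquiv.trans (finCongr (by rw [show d + 1 - 1 = d from rfl,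
          show d + 2 - 1 = d + 1 from rfl, pow_succ]; ring)))
        (finProdFinEquiv.trans (finCongr (by rw [show d + 1 - 1 = d from rfl,
          show d + 2 - 1 = d + 1 from rfl, pow_succ]; ring)))
        (pauliX ⊗ₖ Fmat (d + 1) ⟨j, h⟩)
    else
      Matrix.reindex
        (finProdFinEquiv.trans (finCongr (by rw [show d + 2 - 1 = d + 1 from rfl, pow_succ]; ring)))
        (finProdFinEquiv.trans (finCongr (by rw [show d + 2 - 1 = d + 1 from rfl, pow_succ]; ring)))
        (pauliZ ⊗ₖ (1 : Matrix (Fin (2 ^ d)) (Fin (2 ^ d)) ℂ))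

namespace Matrix

variable {m n ι α : Type*}

theorem IsSymm.kronecker [CommMagma α] {A : Matrix m m α} {B : Matrix n n α} (hA : A.IsSymm)
    (hB : B.IsSymm) : (A ⊗ₖ B).IsSymm := by
  rw [IsSymm, ← kroneckerMap_transpose, hA.eq, hB.eq]

theorem IsHermitian.kronecker [CommMagma α] [StarMul α] {A : Matrix m m α} {B : Matrix n n α}
    (hA : A.IsHermitian) (hB : B.IsHermitian) : (A ⊗ₖ B).IsHermitian := by
  rw [IsHermitian, conjTranspose_kronecker, hA.eq, hB.eq]

section Involution

variable [Fintype m] [Fintype n] [DecidableEq m] [DecidableEq n]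

theorem kronecker_mul_self_eq_one [CommSemiring α] {A : Matrix m m α} {B : Matrix n n α}
    (hA : A * A = 1) (hB : B * B = 1) : A ⊗ₖ B * A ⊗ₖ B = 1 := by
  rw [← mul_kronecker_mul, hA, hB, one_kronecker_one]

theorem reindex_mul_self_eq_one [Semiring α] {A : Matrix m m α} (hA : A * A = 1) (e : m ≃ n) :
    reindex e e A * reindex e e A = 1 := by
  rw [reindex_apply, submatrix_mul_equiv, hA, submatrix_one_equiv]

end Involution

section MaximallyEntangled

variable [Fintype n] [DecidableEq n] [Fintype ι]

theorem kronecker_self_mulVec_vec_one [CommSemiring α] {A : Matrix n n α}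
    (hA : A * Aᵀ = 1) : (A ⊗ₖ A) *ᵥ vec 1 = vec 1 := by
  rw [kronecker_mulVec_vec, Matrix.mul_one, hA]

theorem sum_kronecker_self_mulVec_vec_one [CommSemiring α] (A : ι → Matrix n n α)
    (hA : ∀ i, A i * (A i)ᵀ = 1) :
    (∑ i, A i ⊗ₖ A i) *ᵥ vec 1 = (Fintype.card ι : α) • vec 1 := by
  rw [sum_mulVec]
  simp only [kronecker_self_mulVec_vec_one (hA _), Finset.sum_const, Finset.card_univ]
  exact (Nat.cast_smul_eq_nsmul α _ _).symm

theorem hasEigenvalue_toLin'_sum_kronecker_self [Field α] [Nonempty n]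
    (A : ι → Matrix n n α) (hA : ∀ i, A i * (A i)ᵀ = 1) :
    Module.End.HasEigenvalue (toLin' (∑ i, A i ⊗ₖ A i)) (Fintype.card ι : α) := by
  refine Module.End.hasEigenvalue_of_hasEigenvector (x := vec 1) ⟨?_, ?_⟩
  · rw [Module.End.mem_eigenspace_iff, toLin'_apply, sum_kronecker_self_mulVec_vec_one A hA]
  · rw [Ne, ← vec_zero, vec_inj]
    exact one_ne_zero

end MaximallyEntangled

section OperatorNorm

variable {𝕜 : Type*} [RCLike 𝕜] [Fintype n] [DecidableEq n] [Nonempty n]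

theorem norm_le_norm_toEuclideanCLM_of_hasEigenvalue {A : Matrix n n 𝕜} {μ : 𝕜}
    (h : Module.End.HasEigenvalue (toLin' A) μ) : ‖μ‖ ≤ ‖toEuclideanCLM (𝕜 := 𝕜) A‖ := by
  apply spectrum.norm_le_norm_of_mem
  rwa [AlgEquiv.spectrum_eq, ← spectrum_toLin', ← Module.End.hasEigenvalue_iff_mem_spectrum]

theorem norm_toEuclideanCLM_sum_le_card [Fintype ι] (U : ι → Matrix n n 𝕜)
    (hU : ∀ i, U i ∈ unitary (Matrix n n 𝕜)) :
    ‖toEuclideanCLM (𝕜 := 𝕜) (∑ i, U i)‖ ≤ Fintype.card ι := by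
  rw [map_sum]
  refine (norm_sum_le _ _).trans ?_
  simp [CStarRing.norm_of_mem_unitary (Unitary.map_mem _ (hU _))]

end OperatorNorm

end Matrix

lemma isSymm_pauliX : pauliX.IsSymm := by
  ext i j; fin_cases i <;> fin_cases j <;> rfl

lemma isSymm_pauliZ : pauliZ.IsSymm := by
  ext i j; fin_cases i <;> fin_cases j <;> rfl

lemma isHermitian_pauliX : pauliX.IsHermitian := by
  ext i j; fin_cases i <;> fin_cases j <;> simp [pauliX]

lemma isHermitian_pauliZ : pauliZ.IsHermitian := by
  ext i j; fin_cases i <;> fin_cases j <;> simp [pauliZ]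

lemma pauliX_mul_self : pauliX * pauliX = 1 := by
  simp [pauliX, one_fin_two]

lemma pauliZ_mul_self : pauliZ * pauliZ = 1 := by
  simp [pauliZ, one_fin_two]

theorem Fmat_induction (P : ∀ {k : ℕ}, Matrix (Fin k) (Fin k) ℂ → Prop)
    (one : P (1 : Matrix (Fin 1) (Fin 1) ℂ))
    (pauliX_kronecker : ∀ {k l : ℕ} (e : Fin 2 × Fin k ≃ Fin l) (A : Matrix (Fin k) (Fin k) ℂ),
      P A → P (reindex e e (pauliX ⊗ₖ A)))
    (pauliZ_kronecker_one : ∀ {k l : ℕ} (e : Fin 2 × Fin k ≃ Fin l),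
      P (reindex e e (pauliZ ⊗ₖ (1 : Matrix (Fin k) (Fin k) ℂ)))) :
    ∀ d (j : Fin d), P (Fmat d j)
  | 1, _ => one
  | d + 2, j => by
    rw [Fmat]
    beta_reduce
    split_ifs
    · exact pauliX_kronecker _ _ (Fmat_induction P one pauliX_kronecker pauliZ_kronecker_one _ _)
    · exact pauliZ_kronecker_one _

lemma isSymm_Fmat (d : ℕ) (j : Fin d) : (Fmat d j).IsSymm :=
  Fmat_induction (fun A ↦ A.IsSymm) isSymm_one
    (fun e _ hA ↦ (isSymm_pauliX.kronecker hA).reindex e)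
    (fun e ↦ (isSymm_pauliZ.kronecker isSymm_one).reindex e) d j

lemma isHermitian_Fmat (d : ℕ) (j : Fin d) : (Fmat d j).IsHermitian :=
  Fmat_induction (fun A ↦ A.IsHermitian) isHermitian_one
    (fun e _ hA ↦ (isHermitian_pauliX.kronecker hA).reindex e)
    (fun e ↦ (isHermitian_pauliZ.kronecker isHermitian_one).reindex e) d j

lemma Fmat_mul_self (d : ℕ) (j : Fin d) : Fmat d j * Fmat d j = 1 :=
  Fmat_induction (fun A ↦ A * A = 1) (mul_one 1)
    (fun e _ hA ↦ reindex_mul_self_eq_one (kronecker_mul_self_eq_one pauliX_mul_self hA) e)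
    (fun e ↦ reindex_mul_self_eq_one (kronecker_mul_self_eq_one pauliZ_mul_self (mul_one 1)) e)
    d j

lemma Fmat_mem_unitary (d : ℕ) (j : Fin d) : Fmat d j ∈ unitary _ := by
  rw [Unitary.mem_iff, star_eq_conjTranspose, (isHermitian_Fmat d j).eq, Fmat_mul_self, and_self]

theorem Fmat_kron_sum_hasEigenvalue_card_general (d : ℕ) :
    Module.End.HasEigenvalue
      (Matrix.toLin' (∑ j : Fin d, Fmat d j ⊗ₖ Fmat d j)) (d : ℂ) ∧
    ‖Matrix.toEuclideanCLM (𝕜 := ℂ) (∑ j : Fin d, Fmat d j ⊗ₖ Fmat d j)‖ = d := by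
  have hF (j : Fin d) : Fmat d j * (Fmat d j)ᵀ = 1 := by
    rw [(isSymm_Fmat d j).eq, Fmat_mul_self]
  have heig := hasEigenvalue_toLin'_sum_kronecker_self (Fmat d) hF
  rw [Fintype.card_fin] at heig
  refine ⟨heig, le_antisymm ?_ ?_⟩
  · simpa using norm_toEuclideanCLM_sum_le_card _
      fun j ↦ kronecker_mem_unitary (Fmat_mem_unitary d j) (Fmat_mem_unitary d j)
  · simpa using norm_le_norm_toEuclideanCLM_of_hasEigenvalue heig

/-- The self-adjoint matrix `∑ j, F j ⊗ F j` (Kronecker squares of the recursively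
defined anti-commuting self-adjoint unitaries) has `d` as an eigenvalue; in particular
its operator norm equals `d`. -/
theorem Fmat_kron_sum_hasEigenvalue_card (d : ℕ) (hd : 1 ≤ d) :
    Module.End.HasEigenvalue
      (Matrix.toLin' (∑ j : Fin d, Fmat d j ⊗ₖ Fmat d j)) (d : ℂ) ∧
    ‖Matrix.toEuclideanCLM (𝕜 := ℂ) (∑ j : Fin d, Fmat d j ⊗ₖ Fmat d j)‖ = d :=
  Fmat_kron_sum_hasEigenvalue_card_general d
end

section
/- Let $b > 1$, let $K \subseteq \mathbb{R}^{d-1}$ be compact and convex, and let $\Pi \subseteq \mathbb{R}^d$ be the convex hull of $(K \times \{-1\}) \cup \{(0, \ldots, 0, b)\}$. Then the closed Euclidean unit ball $\overline{\mathbb{B}}_{2,d}$ is contained in $\Pi$ if and only if $\sqrt{\frac{b+1}{b-1}} \cdot \overline{\mathbb{B}}_{2,d-1} \subseteq K$. -/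
/-!
Slicing at height `t ∈ [-1, b)`, the cone `Π` has slice `((b - t) / (b + 1)) • K` while the ball
has slice the ball of radius `√(1 - t²)`. Hence the ball lies in `Π` as soon as `K` contains the
ball of radius `r = √((b + 1) / (b - 1))`, because `(b² - 1)(1 - t²) ≤ (b - t)²` is
`(b t - 1)² ≥ 0`. Equality holds at `t = 1 / b`, where the ball touches the cone: its slice
there is exactly `((b - 1) / b) • B̄(0, r)`, which forces `B̄(0, r) ⊆ K`.
-/

open Pointwise

section Cone

variable {E : Type*} [AddCommGroup E] [Module ℝ E]

def coneOver (K : Set E) (b : ℝ) : Set (E × ℝ) :=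
  convexHull ℝ (insert (0, b) (K ×ˢ {-1}))

theorem mk_mem_coneOver_iff {K : Set E} (hK : Convex ℝ K) {b t : ℝ} {x : E}
    (ht₁ : -1 ≤ t) (ht₂ : t < b) :
    (x, t) ∈ coneOver K b ↔ x ∈ ((b - t) / (b + 1)) • K := by
  have hb : 0 < b + 1 := by linarith
  constructor
  · intro h
    obtain hKe | hKne := K.eq_empty_or_nonempty
    · simp only [coneOver, hKe, Set.empty_prod, insert_empty_eq, convexHull_singleton,
        Set.mem_singleton_iff, Prod.mk.injEq] at h
      linarith
    rw [coneOver, convexHull_insert (hKne.prod (Set.singleton_nonempty _)),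
      (hK.prod (convex_singleton _)).convexHull_eq, mem_convexJoin] at h
    obtain ⟨_, rfl, ⟨k, _⟩, ⟨hk, rfl⟩, α, β, -, -, hαβ, hx⟩ := h
    simp only [Prod.smul_mk, Prod.mk_add_mk, smul_zero, zero_add, smul_eq_mul,
      Prod.mk.injEq] at hx
    have hβ : β = (b - t) / (b + 1) := by
      rw [eq_div_iff hb.ne']
      linear_combination b * hαβ - hx.2
    exact ⟨k, hk, hβ ▸ hx.1⟩
  · rintro ⟨k, hk, rfl⟩
    have hc₀ : 0 ≤ (b - t) / (b + 1) := div_nonneg (by linarith) hb.le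
    have hc₁ : (b - t) / (b + 1) ≤ 1 := (div_le_one hb).2 (by linarith)
    refine segment_subset_convexHull (Set.mem_insert _ _)
      (Set.mem_insert_of_mem _ (Set.mk_mem_prod hk (Set.mem_singleton (-1 : ℝ))))
      ⟨1 - (b - t) / (b + 1), (b - t) / (b + 1), by linarith, hc₀, by ring, ?_⟩
    ext
    · simp
    · simp only [Prod.snd_add, Prod.smul_snd, smul_eq_mul]
      field_simp
      ring

end Cone

theorem le_sqrt_mul_of_sq_add_sq_le_one {b s t : ℝ} (hb : 1 < b) (hs : s ^ 2 + t ^ 2 ≤ 1) :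
    s ≤ √((b + 1) / (b - 1)) * ((b - t) / (b + 1)) := by
  have hb₁ : 0 < b - 1 := by linarith
  have hb₂ : 0 < b + 1 := by linarith
  have ht : t ≤ 1 := by nlinarith
  have key : s ^ 2 ≤ (b + 1) / (b - 1) * ((b - t) / (b + 1)) ^ 2 := by
    rw [div_pow, ← mul_div_assoc, le_div_iff₀ (by positivity)]
    field_simp
    nlinarith [sq_nonneg (b * t - 1),
      mul_le_mul_of_nonneg_right hs (by positivity : (0 : ℝ) ≤ (b + 1) * (b - 1))]
  calc s ≤ √((b + 1) / (b - 1) * ((b - t) / (b + 1)) ^ 2) := Real.le_sqrt_of_sq_le key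
    _ = _ := by
      rw [Real.sqrt_mul (by positivity), Real.sqrt_sq (div_nonneg (by linarith) hb₂.le)]

theorem mul_sq_add_sq_le_one_of_le_sqrt {b s : ℝ} (hb : 1 < b) (hs₀ : 0 ≤ s)
    (hs : s ≤ √((b + 1) / (b - 1))) : ((b - 1) / b * s) ^ 2 + (1 / b) ^ 2 ≤ 1 := by
  calc ((b - 1) / b * s) ^ 2 + (1 / b) ^ 2
      ≤ ((b - 1) / b * √((b + 1) / (b - 1))) ^ 2 + (1 / b) ^ 2 := by
        gcongr
    _ = 1 := by
      rw [mul_pow, Real.sq_sqrt (div_nonneg (by linarith) (by linarith))]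
      field_simp
      ring

section NormedSpace

variable {E : Type*} [NormedAddCommGroup E] [NormedSpace ℝ E]

theorem forall_mem_coneOver_iff_closedBall_subset {K : Set E} (hK : Convex ℝ K) {b : ℝ}
    (hb : 1 < b) :
    (∀ x t, ‖x‖ ^ 2 + t ^ 2 ≤ 1 → (x, t) ∈ coneOver K b) ↔
      Metric.closedBall (0 : E) √((b + 1) / (b - 1)) ⊆ K := by
  have hb₀ : 0 < b := by linarith
  constructor
  · intro h y hy
    have hc : (b - 1) / b ≠ 0 := div_ne_zero (by linarith) hb₀.ne'
    have hb₁ : 0 < 1 / b := one_div_pos.2 hb₀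
    have hb₂ : 1 / b < b := (div_lt_iff₀ hb₀).2 (by nlinarith)
    -- the ball touches the cone at height `1 / b`
    have hq := h (((b - 1) / b) • y) (1 / b) <| by
      rw [norm_smul, Real.norm_eq_abs, abs_of_pos (div_pos (by linarith) hb₀)]
      exact mul_sq_add_sq_le_one_of_le_sqrt hb (norm_nonneg y) (mem_closedBall_zero_iff.1 hy)
    rwa [mk_mem_coneOver_iff hK (by linarith) hb₂,
      show (b - 1 / b) / (b + 1) = (b - 1) / b by field_simp; ring,
      Set.smul_mem_smul_set_iff₀ hc] at hq
  · intro h x t hxt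
    have ht₁ : -1 ≤ t := by nlinarith
    have ht₂ : t < b := by nlinarith
    have hc : 0 < (b - t) / (b + 1) := div_pos (by linarith) (by linarith)
    rw [mk_mem_coneOver_iff hK ht₁ ht₂, Set.mem_smul_set_iff_inv_smul_mem₀ hc.ne']
    apply h
    rw [mem_closedBall_zero_iff, norm_smul, Real.norm_eq_abs, abs_inv, abs_of_pos hc,
      inv_mul_le_iff₀ hc, mul_comm]
    exact le_sqrt_mul_of_sq_add_sq_le_one hb hxt

end NormedSpace

namespace EuclideanSpace

def snocₗ (d : ℕ) : EuclideanSpace ℝ (Fin d) × ℝ →ₗ[ℝ] EuclideanSpace ℝ (Fin (d + 1)) where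
  toFun p := WithLp.toLp 2 (Fin.snoc (WithLp.ofLp p.1) p.2)
  map_add' p q := by
    ext i
    induction i using Fin.lastCases <;> simp
  map_smul' c p := by
    ext i
    induction i using Fin.lastCases <;> simp

variable {d : ℕ}

theorem snocₗ_apply (x : EuclideanSpace ℝ (Fin d)) (t : ℝ) :
    snocₗ d (x, t) = WithLp.toLp 2 (Fin.snoc (WithLp.ofLp x) t) := rfl

theorem snocₗ_injective : Function.Injective (snocₗ d) := by
  rintro ⟨x, t⟩ ⟨y, s⟩ h
  have h' := congrArg
    (fun z : EuclideanSpace ℝ (Fin (d + 1)) => (Fin.init z.ofLp, z (Fin.last d))) h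
  simp only [snocₗ_apply, Fin.init_snoc, Fin.snoc_last, Prod.mk.injEq] at h'
  exact Prod.ext (WithLp.ofLp_injective 2 h'.1) h'.2

theorem snocₗ_surjective : Function.Surjective (snocₗ d) := fun z =>
  ⟨(WithLp.toLp 2 (Fin.init (WithLp.ofLp z)), z (Fin.last d)), by
    simp [snocₗ_apply, Fin.snoc_init_self]⟩

theorem norm_snocₗ_sq (x : EuclideanSpace ℝ (Fin d)) (t : ℝ) :
    ‖snocₗ d (x, t)‖ ^ 2 = ‖x‖ ^ 2 + t ^ 2 := by
  simp [EuclideanSpace.norm_sq_eq, Fin.sum_univ_castSucc, snocₗ_apply]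

theorem image_snocₗ_coneOver (K : Set (EuclideanSpace ℝ (Fin d))) (b : ℝ) :
    snocₗ d '' coneOver K b = convexHull ℝ
      ((fun x : EuclideanSpace ℝ (Fin d) => WithLp.toLp 2 (Fin.snoc (WithLp.ofLp x) (-1))) '' K ∪
        {WithLp.toLp 2 (Fin.snoc (0 : Fin d → ℝ) b)}) := by
  rw [coneOver, LinearMap.image_convexHull, Set.image_insert_eq, Set.prod_singleton,
    Set.image_image, Set.union_singleton]
  rfl

theorem closedBall_subset_image_snocₗ_iff {S : Set (EuclideanSpace ℝ (Fin d) × ℝ)} :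
    Metric.closedBall 0 1 ⊆ snocₗ d '' S ↔ ∀ x t, ‖x‖ ^ 2 + t ^ 2 ≤ 1 → (x, t) ∈ S := by
  simp only [Set.subset_def, mem_closedBall_zero_iff, ← sq_le_one_iff₀ (norm_nonneg _)]
  constructor
  · intro h x t hxt
    obtain ⟨q, hq, hqz⟩ := h _ ((norm_snocₗ_sq x t).symm ▸ hxt)
    rwa [snocₗ_injective hqz] at hq
  · intro h z hz
    obtain ⟨⟨x, t⟩, rfl⟩ := snocₗ_surjective z
    exact Set.mem_image_of_mem _ (h x t (norm_snocₗ_sq x t ▸ hz))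

end EuclideanSpace

open EuclideanSpace in
theorem unitBall_subset_cone_iff_general {d : ℕ} {b : ℝ} (hb : 1 < b)
    (K : Set (EuclideanSpace ℝ (Fin d))) (hKconv : Convex ℝ K) :
    Metric.closedBall (0 : EuclideanSpace ℝ (Fin (d + 1))) 1 ⊆
      convexHull ℝ
        ((fun x : EuclideanSpace ℝ (Fin d) =>
            (WithLp.toLp 2 (Fin.snoc (WithLp.ofLp x) (-1) : Fin (d + 1) → ℝ) : EuclideanSpace ℝ (Fin (d + 1)))) '' K ∪
          {(WithLp.toLp 2 (Fin.snoc (0 : Fin d → ℝ) b : Fin (d + 1) → ℝ) : EuclideanSpace ℝ (Fin (d + 1)))}) ↔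
      Real.sqrt ((b + 1) / (b - 1)) •
          Metric.closedBall (0 : EuclideanSpace ℝ (Fin d)) 1 ⊆ K := by
  have hr : 0 < √((b + 1) / (b - 1)) := Real.sqrt_pos.2 (div_pos (by linarith) (by linarith))
  rw [← image_snocₗ_coneOver, closedBall_subset_image_snocₗ_iff,
    forall_mem_coneOver_iff_closedBall_subset hKconv hb, smul_closedBall _ _ zero_le_one,
    smul_zero, Real.norm_eq_abs, abs_of_pos hr, mul_one]

/-- **Simplex-over-a-base containment criterion.**
Let `b > 1`, let `K ⊆ ℝ^d` be compact and convex, and let `Π ⊆ ℝ^(d+1)` be the convex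
hull of `K × {-1}` together with the point `(0, …, 0, b)`.  Then the closed Euclidean
unit ball of `ℝ^(d+1)` is contained in `Π` if and only if
`√((b+1)/(b-1)) · B̄(0,1) ⊆ K` in `ℝ^d`. -/
theorem unitBall_subset_cone_iff {d : ℕ} {b : ℝ} (hb : 1 < b)
    (K : Set (EuclideanSpace ℝ (Fin d))) (hKcpt : IsCompact K) (hKconv : Convex ℝ K) :
    Metric.closedBall (0 : EuclideanSpace ℝ (Fin (d + 1))) 1 ⊆
      convexHull ℝ
        ((fun x : EuclideanSpace ℝ (Fin d) =>
            (WithLp.toLp 2 (Fin.snoc (WithLp.ofLp x) (-1) : Fin (d + 1) → ℝ) : EuclideanSpace ℝ (Fin (d + 1)))) '' K ∪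
          {(WithLp.toLp 2 (Fin.snoc (0 : Fin d → ℝ) b : Fin (d + 1) → ℝ) : EuclideanSpace ℝ (Fin (d + 1)))}) ↔
      Real.sqrt ((b + 1) / (b - 1)) •
          Metric.closedBall (0 : EuclideanSpace ℝ (Fin d)) 1 ⊆ K :=
  unitBall_subset_cone_iff_general hb K hKconv
end

section
/- Let $X_1, \ldots, X_{d+1}$ be self-adjoint bounded operators with $X_j^2 = I$ for each $j$ (self-adjoint unitaries, not assumed to commute), and let $s > 0$. Define block operators on $H \oplus H$: $Z_j = \begin{pmatrix} X_j & \frac{s}{2}(X_{d+1}X_j - X_j X_{d+1}) \\ \frac{s}{2}(X_j X_{d+1} - X_{d+1}X_j) & X_j \end{pmatrix}$ for $1 \leq j \leq d$, and $Z_{d+1} = \begin{pmatrix} X_{d+1} & \frac{1}{s} I \\ \frac{1}{s} I & -X_{d+1} \end{pmatrix}$. Then each $Z_j$ is self-adjoint, $Z_j$ commutes with $Z_{d+1}$ for every $1 \leq j \leq d$, each $Z_j$ ($j \leq d$) dilates $X_j$ with $\|Z_j\| \leq \sqrt{1+s^2}$, and $Z_{d+1}$ dilates $X_{d+1}$ with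 $\|Z_{d+1}\| \leq \sqrt{1 + 1/s^2}$. -/
set_option synthInstance.maxHeartbeats 1000000
set_option maxHeartbeats 1000000

noncomputable instance prodLpCompleteSpace'
    {H : Type*} [NormedAddCommGroup H] [InnerProductSpace ℂ H] [CompleteSpace H] :
    CompleteSpace (WithLp 2 (H × H)) :=
  inferInstance

/-!
Write `A = X j`, `C = X (d+1)` and `K = C A - A C`. Every `Z` is a 2 × 2 block operator, so all
claims reduce to identities between the blocks. Since `C² = 1`, `C` anticommutes with `K`, which
makes the off-diagonal blocks of `Z j Z_{d+1}` and `Z_{d+1} Z j` agree; the diagonal blocks agree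
because `2 · (s/2) · s⁻¹ = 1`. For the norms use the C⋆-identity `‖Z‖² = ‖Z Z‖` for self-adjoint
`Z`: since `A² = 1`, `A` also anticommutes with `K`, so `Z j Z j` is block diagonal with both
blocks `1 - (s/2)² K²` of norm at most `1 + s²`, and `Z_{d+1} Z_{d+1} = (1 + 1/s²) · 1`.
-/

theorem IsSelfAdjoint.norm_le_one_of_sq_eq_one {𝕜 E : Type*} [RCLike 𝕜] [NormedAddCommGroup E]
    [InnerProductSpace 𝕜 E] [CompleteSpace E] {A : E →L[𝕜] E} (hA : IsSelfAdjoint A)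
    (hA2 : A ^ 2 = 1) : ‖A‖ ≤ 1 := by
  rw [← pow_le_one_iff_of_nonneg (norm_nonneg A) two_ne_zero, ← hA.norm_mul_self, ← sq, hA2]
  exact ContinuousLinearMap.norm_id_le

namespace ContinuousLinearMap

open WithLp (toLp ofLp)

variable {𝕜 E F : Type*} [RCLike 𝕜]
  [NormedAddCommGroup E] [InnerProductSpace 𝕜 E] [NormedAddCommGroup F] [InnerProductSpace 𝕜 F]

section FromBlocks

noncomputable def fromBlocks (A : E →L[𝕜] E) (B : F →L[𝕜] E) (C : E →L[𝕜] F) (D : F →L[𝕜] F) :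
    WithLp 2 (E × F) →L[𝕜] WithLp 2 (E × F) :=
  (WithLp.prodContinuousLinearEquiv 2 𝕜 E F).symm.toContinuousLinearMap ∘L
    (A.coprod B).prod (C.coprod D) ∘L
      (WithLp.prodContinuousLinearEquiv 2 𝕜 E F).toContinuousLinearMap

variable {A A' : E →L[𝕜] E} {B B' : F →L[𝕜] E} {C C' : E →L[𝕜] F} {D D' : F →L[𝕜] F}

@[simp]
theorem fromBlocks_apply (x : WithLp 2 (E × F)) :
    fromBlocks A B C D x =
      toLp 2 (A (ofLp x).1 + B (ofLp x).2, C (ofLp x).1 + D (ofLp x).2) :=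
  rfl

theorem eq_fromBlocks {T : WithLp 2 (E × F) →L[𝕜] WithLp 2 (E × F)}
    (hT : ∀ h k, T (toLp 2 (h, k)) = toLp 2 (A h + B k, C h + D k)) :
    T = fromBlocks A B C D :=
  ext fun x => hT (ofLp x).1 (ofLp x).2

theorem fromBlocks_comp :
    fromBlocks A B C D ∘L fromBlocks A' B' C' D' =
      fromBlocks (A ∘L A' + B ∘L C') (A ∘L B' + B ∘L D') (C ∘L A' + D ∘L C')
        (C ∘L B' + D ∘L D') := by
  ext x
  simp only [comp_apply, fromBlocks_apply, map_add, add_apply]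
  rw [add_add_add_comm, add_add_add_comm (C _)]

theorem fromBlocks_mul {A B C D A' B' C' D' : E →L[𝕜] E} :
    fromBlocks A B C D * fromBlocks A' B' C' D' =
      fromBlocks (A * A' + B * C') (A * B' + B * D') (C * A' + D * C') (C * B' + D * D') :=
  fromBlocks_comp

theorem adjoint_fromBlocks [CompleteSpace E] [CompleteSpace F] :
    adjoint (fromBlocks A B C D) = fromBlocks (adjoint A) (adjoint C) (adjoint B) (adjoint D) := by
  refine ((eq_adjoint_iff _ _).2 fun x y => ?_).symm
  simp only [WithLp.prod_inner_apply, fromBlocks_apply, inner_add_left, inner_add_right,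
    adjoint_inner_left]
  ring

theorem norm_fromBlocks_zero_zero_le : ‖fromBlocks A 0 0 D‖ ≤ max ‖A‖ ‖D‖ := by
  refine opNorm_le_bound _ (by positivity) fun x => ?_
  have hA := A.le_of_opNorm_le (le_max_left _ ‖D‖) (ofLp x).1
  have hD := D.le_of_opNorm_le (le_max_right ‖A‖ _) (ofLp x).2
  rw [← pow_le_pow_iff_left₀ (norm_nonneg _) (by positivity) two_ne_zero,
    WithLp.prod_norm_sq_eq_of_L2, mul_pow, WithLp.prod_norm_sq_eq_of_L2]
  calc ‖A (ofLp x).1 + 0‖ ^ 2 + ‖0 + D (ofLp x).2‖ ^ 2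
      ≤ (max ‖A‖ ‖D‖ * ‖x.fst‖) ^ 2 + (max ‖A‖ ‖D‖ * ‖x.snd‖) ^ 2 := by
        rw [add_zero, zero_add]; gcongr; exacts [hA, hD]
    _ = _ := by ring

end FromBlocks

end ContinuousLinearMap

section Dilations

open ContinuousLinearMap

variable {𝕜 E : Type*} [RCLike 𝕜] [NormedAddCommGroup E] [InnerProductSpace 𝕜 E]
  (s : ℝ) (A C : E →L[𝕜] E)

noncomputable def commutatorDilation : WithLp 2 (E × E) →L[𝕜] WithLp 2 (E × E) :=
  fromBlocks A ((s / 2 : 𝕜) • (C * A - A * C)) ((s / 2 : 𝕜) • (A * C - C * A)) A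

noncomputable def involutionDilation : WithLp 2 (E × E) →L[𝕜] WithLp 2 (E × E) :=
  fromBlocks C ((s : 𝕜)⁻¹ • 1) ((s : 𝕜)⁻¹ • 1) (-C)

variable {s A C}

theorem isSelfAdjoint_commutatorDilation [CompleteSpace E] (hA : IsSelfAdjoint A)
    (hC : IsSelfAdjoint C) : IsSelfAdjoint (commutatorDilation s A C) := by
  rw [isSelfAdjoint_iff', commutatorDilation, adjoint_fromBlocks, ← star_eq_adjoint,
    ← star_eq_adjoint, ← star_eq_adjoint]
  simp [hA.star_eq, hC.star_eq]

theorem isSelfAdjoint_involutionDilation [CompleteSpace E] (hC : IsSelfAdjoint C) :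
    IsSelfAdjoint (involutionDilation s C) := by
  rw [isSelfAdjoint_iff', involutionDilation, adjoint_fromBlocks, ← star_eq_adjoint,
    ← star_eq_adjoint, ← star_eq_adjoint]
  simp [hC.star_eq]

theorem commute_commutatorDilation_involutionDilation (hs : s ≠ 0) (hC : C ^ 2 = 1) :
    Commute (commutatorDilation s A C) (involutionDilation s C) := by
  have hCC : C * C = 1 := by rw [← sq, hC]
  have hCC' (X : E →L[𝕜] E) : X * C * C = X := by rw [mul_assoc, hCC, mul_one]
  have hs' : (s : 𝕜) ≠ 0 := by exact_mod_cast hs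
  have h2 : (s / 2 : 𝕜) * (s : 𝕜)⁻¹ = 2⁻¹ := by field_simp
  have h2' : (s : 𝕜)⁻¹ * (s / 2 : 𝕜) = 2⁻¹ := by field_simp
  rw [commute_iff_eq, commutatorDilation, involutionDilation, fromBlocks_mul, fromBlocks_mul]
  congr 1 <;>
  simp only [mul_sub, sub_mul, mul_smul_comm, smul_mul_assoc, mul_one, one_mul, mul_neg, neg_mul,
    smul_sub, smul_smul, ← mul_assoc, hCC, hCC', h2, h2'] <;>
  module

theorem commutatorDilation_mul_self (hA : A ^ 2 = 1) :
    commutatorDilation s A C * commutatorDilation s A C =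
      fromBlocks (1 - (s / 2 : 𝕜) ^ 2 • (C * A - A * C) ^ 2) 0 0
        (1 - (s / 2 : 𝕜) ^ 2 • (C * A - A * C) ^ 2) := by
  have hAA : A * A = 1 := by rw [← sq, hA]
  have hAA' (X : E →L[𝕜] E) : X * A * A = X := by rw [mul_assoc, hAA, mul_one]
  rw [commutatorDilation, fromBlocks_mul]
  congr 1 <;>
  simp only [sq, mul_sub, sub_mul, mul_smul_comm, smul_mul_assoc, smul_sub, smul_smul,
    ← mul_assoc, hAA, hAA', one_mul] <;>
  module

theorem involutionDilation_mul_self (hC : C ^ 2 = 1) :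
    involutionDilation s C * involutionDilation s C =
      fromBlocks (((1 + 1 / s ^ 2 : ℝ) : 𝕜) • 1) 0 0 (((1 + 1 / s ^ 2 : ℝ) : 𝕜) • 1) := by
  have hCC : C * C = 1 := by rw [← sq, hC]
  rw [involutionDilation, fromBlocks_mul]
  congr 1 <;>
  simp only [mul_smul_comm, smul_mul_assoc, mul_one, one_mul, mul_neg, neg_mul, neg_neg, hCC,
    smul_smul] <;>
  push_cast <;>
  module

theorem norm_commutatorDilation_le [CompleteSpace E] (hA : IsSelfAdjoint A)
    (hC : IsSelfAdjoint C) (hA2 : A ^ 2 = 1) (hC2 : C ^ 2 = 1) :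
    ‖commutatorDilation s A C‖ ≤ √(1 + s ^ 2) := by
  have hK : ‖C * A - A * C‖ ≤ 2 := by
    have hA1 := hA.norm_le_one_of_sq_eq_one hA2
    have hC1 := hC.norm_le_one_of_sq_eq_one hC2
    calc ‖C * A - A * C‖ ≤ ‖C * A‖ + ‖A * C‖ := norm_sub_le _ _
      _ ≤ 1 * 1 + 1 * 1 := add_le_add (norm_mul_le_of_le hC1 hA1) (norm_mul_le_of_le hA1 hC1)
      _ = 2 := by norm_num
  refine Real.le_sqrt_of_sq_le ?_
  rw [← (isSelfAdjoint_commutatorDilation hA hC).norm_mul_self, commutatorDilation_mul_self hA2]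
  calc _ ≤ _ := norm_fromBlocks_zero_zero_le
    _ = ‖1 - (s / 2 : 𝕜) ^ 2 • (C * A - A * C) ^ 2‖ := max_self _
    _ ≤ ‖(1 : E →L[𝕜] E)‖ + ‖(s / 2 : 𝕜) ^ 2 • (C * A - A * C) ^ 2‖ := norm_sub_le _ _
    _ ≤ 1 + ‖(s / 2 : 𝕜) ^ 2‖ * ‖C * A - A * C‖ ^ 2 := by
      gcongr
      · exact norm_id_le
      · rw [norm_smul]; gcongr; exact norm_pow_le' _ two_pos
    _ ≤ 1 + (|s| / 2) ^ 2 * 2 ^ 2 := by gcongr; simp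
    _ = 1 + s ^ 2 := by rw [div_pow, sq_abs]; ring

theorem norm_involutionDilation_le [CompleteSpace E] (hC : IsSelfAdjoint C) (hC2 : C ^ 2 = 1) :
    ‖involutionDilation s C‖ ≤ √(1 + 1 / s ^ 2) := by
  refine Real.le_sqrt_of_sq_le ?_
  rw [← (isSelfAdjoint_involutionDilation hC).norm_mul_self, involutionDilation_mul_self hC2]
  calc _ ≤ _ := norm_fromBlocks_zero_zero_le
    _ = ‖((1 + 1 / s ^ 2 : ℝ) : 𝕜) • (1 : E →L[𝕜] E)‖ := max_self _
    _ ≤ ‖((1 + 1 / s ^ 2 : ℝ) : 𝕜)‖ * ‖(1 : E →L[𝕜] E)‖ := norm_smul_le _ (1 : E →L[𝕜] E)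
    _ ≤ ‖((1 + 1 / s ^ 2 : ℝ) : 𝕜)‖ * 1 := by gcongr; exact norm_id_le
    _ = 1 + 1 / s ^ 2 := by rw [mul_one, RCLike.norm_ofReal, abs_of_pos (by positivity)]

end Dilations

/-- **Commuting block dilation of self-adjoint unitaries.**
Let `X 1, …, X (d+1)` be self-adjoint operators with `X j ² = I` (not assumed to
commute) and let `s > 0`.  Consider the block operators on `H ⊕₂ H`:
`Z j = [[X j, (s/2)(X_{d+1} X j - X j X_{d+1})], [(s/2)(X j X_{d+1} - X_{d+1} X j), X j]]`
for `j ≤ d` and `Z_{d+1} = [[X_{d+1}, (1/s) I], [(1/s) I, -X_{d+1}]]`.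
Then each `Z j` is self-adjoint, each `Z j` (`j ≤ d`) commutes with `Z_{d+1}`,
each `Z j` dilates `X j`, `‖Z j‖ ≤ √(1+s²)` for `j ≤ d`,
and `‖Z_{d+1}‖ ≤ √(1+1/s²)`. -/
theorem block_commuting_dilation
    {H : Type*} [NormedAddCommGroup H] [InnerProductSpace ℂ H] [CompleteSpace H]
    {d : ℕ} {s : ℝ} (hs : 0 < s)
    (X : Fin (d + 1) → H →L[ℂ] H)
    (hsa : ∀ j, IsSelfAdjoint (X j))
    (hunit : ∀ j, (X j) ^ 2 = 1)
    (Z : Fin (d + 1) → WithLp 2 (H × H) →L[ℂ] WithLp 2 (H × H))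
    (hZ : ∀ (j : Fin d) (h k : H),
      Z j.castSucc ((WithLp.equiv 2 (H × H)).symm (h, k)) =
        (WithLp.equiv 2 (H × H)).symm
          (X j.castSucc h +
              ((s / 2 : ℂ)) •
                ((X (Fin.last d) * X j.castSucc - X j.castSucc * X (Fin.last d)) k),
            ((s / 2 : ℂ)) •
                ((X j.castSucc * X (Fin.last d) - X (Fin.last d) * X j.castSucc) h) +
              X j.castSucc k))
    (hZlast : ∀ h k : H,
      Z (Fin.last d) ((WithLp.equiv 2 (H × H)).symm (h, k)) =
        (WithLp.equiv 2 (H × H)).symm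
          (X (Fin.last d) h + ((s : ℂ))⁻¹ • k,
            ((s : ℂ))⁻¹ • h - X (Fin.last d) k)) :
    (∀ j, IsSelfAdjoint (Z j)) ∧
    (∀ j : Fin d, Commute (Z j.castSucc) (Z (Fin.last d))) ∧
    (∀ (j : Fin (d + 1)) (h : H),
      ((WithLp.equiv 2 (H × H)) (Z j ((WithLp.equiv 2 (H × H)).symm (h, 0)))).1 = X j h) ∧
    (∀ j : Fin d, ‖Z j.castSucc‖ ≤ Real.sqrt (1 + s ^ 2)) ∧
    ‖Z (Fin.last d)‖ ≤ Real.sqrt (1 + 1 / s ^ 2) := by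
  have hZj (j : Fin d) :
      Z j.castSucc = commutatorDilation s (X j.castSucc) (X (Fin.last d)) :=
    ContinuousLinearMap.eq_fromBlocks (hZ j)
  have hZl : Z (Fin.last d) = involutionDilation s (X (Fin.last d)) :=
    ContinuousLinearMap.eq_fromBlocks fun h k => (hZlast h k).trans (by simp [sub_eq_add_neg])
  refine ⟨fun j => ?_, fun j => ?_, fun j h => ?_, fun j => ?_, ?_⟩
  · induction j using Fin.lastCases with
    | last => rw [hZl]; exact isSelfAdjoint_involutionDilation (hsa _)
    | cast j => rw [hZj]; exact isSelfAdjoint_commutatorDilation (hsa _) (hsa _)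
  · rw [hZj, hZl]
    exact commute_commutatorDilation_involutionDilation hs.ne' (hunit _)
  · induction j using Fin.lastCases with
    | last => simp [hZl, involutionDilation]
    | cast j => simp [hZj, commutatorDilation]
  · rw [hZj]
    exact norm_commutatorDilation_le (hsa _) (hsa _) (hunit _) (hunit _)
  · rw [hZl]
    exact norm_involutionDilation_le (hsa _) (hunit _)
end

section
/- Let $a_1, \ldots, a_d > 0$ with $\sum_{j=1}^d \frac{1}{a_j^2} \leq 1$. Then for every $d$-tuple $X_1, \ldots, X_d$ of self-adjoint operators on a Hilbert space $H$ with $\|X_j\| \leq 1$ for all $j$, there exist commuting self-adjoint operators $N_1, \ldots, N_d$ on $H \otimes \mathbb{C}^{4^{d-1}}$ with $\|N_j\| \leq a_j$ and an isometry $V : H \to H \otimes \mathbb{C}^{4^{d-1}}$ such that $X_j = V^* N_j V$ for all $j$. -/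
noncomputable instance piLpCompleteSpace'
    {H : Type*} [NormedAddCommGroup H] [InnerProductSpace ℂ H] [CompleteSpace H]
    (n : ℕ) : CompleteSpace (PiLp 2 (fun _ : Fin n => H)) :=
  inferInstance

/-!
Put `Y j = (a j)⁻¹ • X j`, so that `∑ ‖Y j‖² ≤ 1` and hence `1 - ∑ Y j² ≥ 0`. For a sign pattern
`ε ∈ {±1}^d` let `S ε = ∑ ε j • Y j` and `P ε = 2^-(d+1) • ((1 + S ε)² + (1 - ∑ Y j²)) ≥ 0`.
Averaging over all sign patterns, `ε ↦ -ε` kills the odd terms and `∑_ε ε j ε k = 2^d δ_jk`, so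
`∑ P ε = 1` and `∑ ε j • P ε = Y j`: the `P ε` form a positive operator valued measure with
`X j = ∑ (a j ε j) • P ε`. Writing `P ε = B ε* B ε`, the column `V x = (B ε x)_ε` is an isometry
(Naimark's dilation) and compresses the diagonal operator `N j = diag (a j ε j)_ε` to `X j`; these
diagonal operators commute, are self-adjoint and have norm at most `a j`. There are
`2^d ≤ 4^(d-1)` sign patterns once `d ≥ 2`, while for `d ≤ 1` the dilation `N j = diag (X j)`
works because `a j ≥ 1`.
-/

open Finset ContinuousLinearMap

theorem sum_eq_zero_of_mul_left_eq_neg {G M : Type*} [Group G] [Fintype G] [AddCommGroup M]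
    [IsAddTorsionFree M] (g : G) {φ : G → M} (h : ∀ x, φ (g * x) = -φ x) : ∑ x, φ x = 0 := by
  rw [← self_eq_neg]
  calc ∑ x, φ x = ∑ x, φ (g * x) := (Equiv.sum_comp (Equiv.mulLeft g) φ).symm
    _ = -∑ x, φ x := by simp only [h, sum_neg_distrib]

theorem one_add_sq_add_one_sub {A : Type*} [Ring A] [Algebra ℝ A] (S Q : A) :
    (1 + S) ^ 2 + (1 - Q) = (2 : ℝ) • (1 + S) + (S ^ 2 - Q) := by
  rw [two_smul]
  noncomm_ring

section SignPatterns

variable {ι : Type*} [Fintype ι] {A : Type*} [Ring A] [Algebra ℝ A]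

def signSum (Y : ι → A) (ε : ι → ℤˣ) : A := ∑ j, ((ε j : ℤ) : ℝ) • Y j

noncomputable def signPOVM (Y : ι → A) (ε : ι → ℤˣ) : A :=
  ((2 : ℝ) ^ (Fintype.card ι + 1))⁻¹ • ((1 + signSum Y ε) ^ 2 + (1 - ∑ j, Y j ^ 2))

variable (Y : ι → A)

theorem signSum_odd : (signSum Y).Odd := fun ε => by
  simp [signSum]

theorem signSum_sq (ε : ι → ℤˣ) :
    signSum Y ε ^ 2 = ∑ j, (((ε j : ℤ) : ℝ) • signSum Y ε) * Y j := by
  rw [sq]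
  nth_rewrite 2 [signSum]
  simp only [mul_sum, mul_smul_comm, smul_mul_assoc]

variable [DecidableEq ι]

theorem sum_const_pi_units (c : A) : ∑ _ε : ι → ℤˣ, c = (2 : ℝ) ^ Fintype.card ι • c := by
  simp [Fintype.card_units_int, ← Nat.cast_smul_eq_nsmul ℝ]

theorem sum_sign_mul_sign (j k : ι) :
    ∑ ε : ι → ℤˣ, ((ε j : ℤ) : ℝ) * (ε k : ℤ) =
      if j = k then (2 : ℝ) ^ Fintype.card ι else 0 := by
  split_ifs with hjk
  · subst hjk
    simp [← Int.cast_mul, ← Units.val_mul, Int.units_mul_self, Fintype.card_units_int]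
  · refine sum_eq_zero_of_mul_left_eq_neg (Pi.mulSingle j (-1)) fun ε => ?_
    simp [Ne.symm hjk]

theorem sum_sign_smul_signSum (j : ι) :
    ∑ ε, ((ε j : ℤ) : ℝ) • signSum Y ε = (2 : ℝ) ^ Fintype.card ι • Y j := by
  simp only [signSum, smul_sum, smul_smul]
  rw [sum_comm]
  simp [← sum_smul, sum_sign_mul_sign]

theorem sum_signSum_sq : ∑ ε, signSum Y ε ^ 2 = (2 : ℝ) ^ Fintype.card ι • ∑ j, Y j ^ 2 := by
  rw [sum_congr rfl fun ε _ => signSum_sq Y ε, sum_comm]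
  simp_rw [← sum_mul, sum_sign_smul_signSum, smul_mul_assoc, ← smul_sum, sq]

theorem sum_signPOVM : ∑ ε, signPOVM Y ε = 1 := by
  have := IsAddTorsionFree.of_isTorsionFree ℝ A
  have hsum : ∑ ε, ((1 + signSum Y ε) ^ 2 + (1 - ∑ j, Y j ^ 2)) =
      (2 : ℝ) ^ (Fintype.card ι + 1) • 1 := by
    simp_rw [one_add_sq_add_one_sub, sum_add_distrib, sum_sub_distrib, ← smul_sum,
      sum_add_distrib, (signSum_odd Y).sum_eq_zero, sum_signSum_sq, sum_const_pi_units]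
    module
  simp_rw [signPOVM, ← smul_sum, hsum, inv_smul_smul₀ (pow_ne_zero _ (two_ne_zero (α := ℝ)))]

theorem sum_sign_smul_signPOVM (j : ι) : ∑ ε, ((ε j : ℤ) : ℝ) • signPOVM Y ε = Y j := by
  have := IsAddTorsionFree.of_isTorsionFree ℝ A
  have hodd₁ : (fun ε : ι → ℤˣ => ((ε j : ℤ) : ℝ) • (1 : A)).Odd := fun ε => by simp
  have hodd₂ : (fun ε => ((ε j : ℤ) : ℝ) • (signSum Y ε ^ 2 - ∑ k, Y k ^ 2)).Odd := fun ε => by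
    simp [signSum_odd Y ε]
  have hsum : ∑ ε, ((ε j : ℤ) : ℝ) • ((1 + signSum Y ε) ^ 2 + (1 - ∑ j, Y j ^ 2)) =
      (2 : ℝ) ^ (Fintype.card ι + 1) • Y j := by
    simp_rw [one_add_sq_add_one_sub, smul_add, sum_add_distrib, hodd₂.sum_eq_zero,
      smul_comm _ (2 : ℝ), ← smul_sum, hodd₁.sum_eq_zero, sum_sign_smul_signSum]
    module
  simp_rw [signPOVM, smul_comm _ ((2 : ℝ) ^ _)⁻¹, ← smul_sum, hsum,
    inv_smul_smul₀ (pow_ne_zero _ (two_ne_zero (α := ℝ)))]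

end SignPatterns

section CStarAlgebra

variable {ι : Type*} [Fintype ι] {A : Type*} [CStarAlgebra A] [PartialOrder A] [StarOrderedRing A]

theorem one_sub_sum_sq_nonneg {Y : ι → A} (hY : ∀ j, IsSelfAdjoint (Y j))
    (hnorm : ∑ j, ‖Y j‖ ^ 2 ≤ 1) : 0 ≤ 1 - ∑ j, Y j ^ 2 := by
  rw [sub_nonneg]
  calc ∑ j, Y j ^ 2 ≤ ∑ j, algebraMap ℝ A (‖Y j‖ ^ 2) := by
        refine sum_le_sum fun j _ => ?_
        simpa only [(hY j).star_eq, sq] using CStarAlgebra.star_mul_le_algebraMap_norm_sq (a := Y j)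
    _ ≤ algebraMap ℝ A 1 := by
        rw [← map_sum]
        exact algebraMap_mono A hnorm
    _ = 1 := map_one _

theorem signPOVM_nonneg {Y : ι → A} (hY : ∀ j, IsSelfAdjoint (Y j))
    (hnorm : ∑ j, ‖Y j‖ ^ 2 ≤ 1) (ε : ι → ℤˣ) : 0 ≤ signPOVM Y ε := by
  have hS : IsSelfAdjoint (1 + signSum Y ε) :=
    .add (.one A) (isSelfAdjoint_sum _ fun j _ => .smul (star_trivial _) (hY j))
  exact smul_nonneg (by positivity) (add_nonneg hS.sq_nonneg (one_sub_sum_sq_nonneg hY hnorm))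

end CStarAlgebra

section BlockOperators

variable {H : Type*} [NormedAddCommGroup H] [InnerProductSpace ℂ H] {κ : Type*}

noncomputable def blockDiagonal (D : κ → H →L[ℂ] H) :
    PiLp 2 (fun _ : κ => H) →L[ℂ] PiLp 2 (fun _ : κ => H) :=
  (PiLp.continuousLinearEquiv 2 ℂ _).symm.toContinuousLinearMap ∘L piMap D ∘L
    (PiLp.continuousLinearEquiv 2 ℂ _).toContinuousLinearMap

@[simp]
theorem blockDiagonal_apply (D : κ → H →L[ℂ] H) (x : PiLp 2 (fun _ : κ => H)) (k : κ) :
    blockDiagonal D x k = D k (x k) := rfl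

noncomputable def blockColumn (B : κ → H →L[ℂ] H) : H →L[ℂ] PiLp 2 (fun _ : κ => H) :=
  (PiLp.continuousLinearEquiv 2 ℂ _).symm.toContinuousLinearMap ∘L pi B

@[simp]
theorem blockColumn_apply (B : κ → H →L[ℂ] H) (x : H) (k : κ) : blockColumn B x k = B k x := rfl

theorem blockDiagonal_one : blockDiagonal (1 : κ → H →L[ℂ] H) = 1 := rfl

theorem blockDiagonal_mul (D E : κ → H →L[ℂ] H) :
    blockDiagonal D * blockDiagonal E = blockDiagonal (D * E) := rfl

theorem commute_blockDiagonal {D E : κ → H →L[ℂ] H} (h : ∀ k, Commute (D k) (E k)) :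
    Commute (blockDiagonal D) (blockDiagonal E) := by
  rw [Commute, SemiconjBy, blockDiagonal_mul, blockDiagonal_mul, (Pi.commute_iff.mpr h).eq]

variable [Fintype κ]

theorem norm_blockDiagonal_le {D : κ → H →L[ℂ] H} {C : ℝ} (hC : 0 ≤ C) (h : ∀ k, ‖D k‖ ≤ C) :
    ‖blockDiagonal D‖ ≤ C := by
  refine opNorm_le_bound _ hC fun x => ?_
  rw [← sq_le_sq₀ (norm_nonneg _) (by positivity), PiLp.norm_sq_eq_of_L2, mul_pow,
    PiLp.norm_sq_eq_of_L2, mul_sum]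
  refine sum_le_sum fun k _ => ?_
  rw [← mul_pow]
  gcongr
  exact (D k).le_of_opNorm_le (h k) (x k)

variable [CompleteSpace H]

theorem isSelfAdjoint_blockDiagonal {D : κ → H →L[ℂ] H} (h : ∀ k, IsSelfAdjoint (D k)) :
    IsSelfAdjoint (blockDiagonal D) := by
  rw [isSelfAdjoint_iff_isSymmetric]
  intro x y
  simp only [PiLp.inner_apply, coe_coe, blockDiagonal_apply]
  exact sum_congr rfl fun k _ => (isSelfAdjoint_iff_isSymmetric.mp (h k)) (x k) (y k)

theorem adjoint_blockColumn_comp_blockDiagonal_comp_blockColumn (B D : κ → H →L[ℂ] H) :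
    adjoint (blockColumn B) ∘L blockDiagonal D ∘L blockColumn B =
      ∑ k, adjoint (B k) ∘L D k ∘L B k := by
  ext x
  refine ext_inner_right ℂ fun y => ?_
  simp only [comp_apply, adjoint_inner_left, PiLp.inner_apply, _root_.sum_apply,
    sum_inner, blockDiagonal_apply, blockColumn_apply]

theorem isometry_blockColumn {B : κ → H →L[ℂ] H} (hB : ∑ k, adjoint (B k) ∘L B k = 1) :
    Isometry (blockColumn B) := by
  rw [isometry_iff_adjoint_comp_self, ← hB]
  simpa [blockDiagonal_one, one_def] using
    adjoint_blockColumn_comp_blockDiagonal_comp_blockColumn B 1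

theorem exists_isometry_adjoint_comp_blockDiagonal_const_comp [Nonempty κ] :
    ∃ V : H →L[ℂ] PiLp 2 (fun _ : κ => H), Isometry V ∧
      ∀ X, adjoint V ∘L blockDiagonal (fun _ => X) ∘L V = X := by
  classical
  obtain ⟨k₀⟩ := ‹Nonempty κ›
  set B : κ → H →L[ℂ] H := Pi.single k₀ 1
  have key (X : H →L[ℂ] H) : ∑ k, adjoint (B k) ∘L X ∘L B k = X := by
    rw [Fintype.sum_eq_single k₀ fun k hk => by simp [B, hk]]
    simp [B, one_def, adjoint_id]
  refine ⟨blockColumn B, isometry_blockColumn ?_, fun X => ?_⟩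
  · simpa [one_def] using key 1
  · rw [adjoint_blockColumn_comp_blockDiagonal_comp_blockColumn, key]

theorem exists_isometry_adjoint_comp_blockDiagonal_smul_one_comp {ι : Type*} [Fintype ι]
    {P : ι → H →L[ℂ] H} (hP : ∀ i, 0 ≤ P i) (hP1 : ∑ i, P i = 1) {e : ι → κ}
    (he : e.Injective) :
    ∃ V : H →L[ℂ] PiLp 2 (fun _ : κ => H), Isometry V ∧
      ∀ c : κ → ℝ, adjoint V ∘L blockDiagonal (fun k => c k • 1) ∘L V = ∑ i, c (e i) • P i := by
  choose B hB using fun i => CStarAlgebra.nonneg_iff_eq_star_mul_self.mp (hP i)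
  set B' := Function.extend e B 0
  have key (c : κ → ℝ) : ∑ k, c k • (adjoint (B' k) ∘L B' k) = ∑ i, c (e i) • P i := by
    refine (Fintype.sum_of_injective e he _ _ (fun k hk => ?_) (fun i => ?_)).symm
    · simp [B', Function.extend_apply' _ _ _ hk]
    · simp [B', he.extend_apply, hB, star_eq_adjoint, ContinuousLinearMap.mul_def]
  refine ⟨blockColumn B', isometry_blockColumn (by simpa [hP1] using key 1), fun c => ?_⟩
  rw [adjoint_blockColumn_comp_blockDiagonal_comp_blockColumn, ← key]
  simp [smul_comp, comp_smul, one_def]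

end BlockOperators

section CommutingDilation

variable {H : Type*} [NormedAddCommGroup H] [InnerProductSpace ℂ H] [CompleteSpace H]
  {J : Type*} (κ : Type*) [Fintype κ]

def HasCommutingDilation (X : J → H →L[ℂ] H) (C : J → ℝ) : Prop :=
  ∃ (N : J → (PiLp 2 (fun _ : κ => H) →L[ℂ] PiLp 2 (fun _ : κ => H)))
    (V : H →L[ℂ] PiLp 2 (fun _ : κ => H)),
    (∀ i j, Commute (N i) (N j)) ∧
    (∀ j, IsSelfAdjoint (N j)) ∧
    (∀ j, ‖N j‖ ≤ C j) ∧
    Isometry V ∧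
    (∀ j, X j = adjoint V ∘L N j ∘L V)

variable {κ}

theorem hasCommutingDilation_of_subsingleton [Subsingleton J] [Nonempty κ]
    {X : J → H →L[ℂ] H} (hX : ∀ j, IsSelfAdjoint (X j)) {C : J → ℝ} (hC : ∀ j, ‖X j‖ ≤ C j) :
    HasCommutingDilation κ X C := by
  obtain ⟨V, hV, hVX⟩ := exists_isometry_adjoint_comp_blockDiagonal_const_comp (H := H) (κ := κ)
  exact ⟨fun j => blockDiagonal fun _ => X j, V, fun i j => by rw [Subsingleton.elim i j],
    fun j => isSelfAdjoint_blockDiagonal fun _ => hX j,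
    fun j => norm_blockDiagonal_le ((norm_nonneg _).trans (hC j)) fun _ => hC j, hV,
    fun j => (hVX (X j)).symm⟩

theorem hasCommutingDilation_of_eq_sum_smul {ι : Type*} [Fintype ι] [Nonempty ι]
    (hcard : Fintype.card ι ≤ Fintype.card κ) {P : ι → H →L[ℂ] H} (hP : ∀ i, 0 ≤ P i)
    (hP1 : ∑ i, P i = 1) {X : J → H →L[ℂ] H} {w : J → ι → ℝ} (hX : ∀ j, X j = ∑ i, w j i • P i)
    {C : J → ℝ} (hw : ∀ j i, |w j i| ≤ C j) :
    HasCommutingDilation κ X C := by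
  obtain ⟨e⟩ := Function.Embedding.nonempty_of_card_le hcard
  obtain ⟨V, hV, hVc⟩ := exists_isometry_adjoint_comp_blockDiagonal_smul_one_comp hP hP1 e.injective
  -- coordinates outside the range of `e` get an arbitrary label: `V` vanishes there
  set c : J → κ → ℝ := fun j k => w j (Function.invFun e k)
  refine ⟨fun j => blockDiagonal fun k => c j k • 1, V, fun i j => ?_, fun j => ?_, fun j => ?_, hV,
    fun j => ?_⟩
  · exact commute_blockDiagonal fun k => ((Commute.one_left _).smul_left _).smul_right _
  · exact isSelfAdjoint_blockDiagonal fun k => .smul (star_trivial _) (.one _)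
  · refine norm_blockDiagonal_le ((abs_nonneg _).trans (hw j (Classical.arbitrary ι))) fun k => ?_
    calc ‖c j k • (1 : H →L[ℂ] H)‖ ≤ |c j k| * 1 := by
          rw [norm_smul, Real.norm_eq_abs]; gcongr; exact norm_id_le
      _ ≤ C j := by simpa using hw j _
  · simp [hVc, hX, c, Function.leftInverse_invFun e.injective _]

end CommutingDilation

theorem one_le_of_sum_one_div_sq_le_one {ι : Type*} [Fintype ι] {a : ι → ℝ} (ha : ∀ j, 0 < a j)
    (hsum : ∑ j, 1 / a j ^ 2 ≤ 1) (j : ι) : 1 ≤ a j := by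
  have h : 1 / a j ^ 2 ≤ 1 :=
    (single_le_sum (fun k _ => by positivity) (mem_univ j)).trans hsum
  rw [div_le_one (pow_pos (ha j) 2)] at h
  nlinarith [ha j]

/-- **Sharp dilation for the cube.**
Let `a 1, …, a d > 0` with `∑ 1/a j² ≤ 1`.  Then every `d`-tuple of self-adjoint
contractions `X 1, …, X d` on a Hilbert space `H` dilates to a commuting tuple of
self-adjoint operators `N 1, …, N d` on `H ⊗ ℂ^(4^(d-1))` with `‖N j‖ ≤ a j`:
there is an isometry `V` with `X j = V* ∘ N j ∘ V` for all `j`. -/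
theorem cube_dilation
    {H : Type*} [NormedAddCommGroup H] [InnerProductSpace ℂ H] [CompleteSpace H]
    {d : ℕ} (a : Fin d → ℝ) (ha : ∀ j, 0 < a j)
    (hsum : ∑ j, 1 / (a j) ^ 2 ≤ 1)
    (X : Fin d → H →L[ℂ] H)
    (hsa : ∀ j, IsSelfAdjoint (X j))
    (hX : ∀ j, ‖X j‖ ≤ 1) :
    ∃ (N : Fin d →
        (PiLp 2 (fun _ : Fin (4 ^ (d - 1)) => H) →L[ℂ] PiLp 2 (fun _ : Fin (4 ^ (d - 1)) => H)))
      (V : H →L[ℂ] PiLp 2 (fun _ : Fin (4 ^ (d - 1)) => H)),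
      (∀ i j, Commute (N i) (N j)) ∧
      (∀ j, IsSelfAdjoint (N j)) ∧
      (∀ j, ‖N j‖ ≤ a j) ∧
      Isometry V ∧
      (∀ j, X j = ContinuousLinearMap.adjoint V ∘L N j ∘L V) := by
  rcases le_or_gt d 1 with hd | hd
  · have : Subsingleton (Fin d) := Fin.subsingleton_iff_le_one.mpr hd
    exact hasCommutingDilation_of_subsingleton hsa fun j =>
      (hX j).trans (one_le_of_sum_one_div_sq_le_one ha hsum j)
  set Y : Fin d → H →L[ℂ] H := fun j => (a j)⁻¹ • X j
  have hY (j : Fin d) : IsSelfAdjoint (Y j) := .smul (star_trivial _) (hsa j)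
  have hYnorm : ∑ j, ‖Y j‖ ^ 2 ≤ 1 := hsum.trans' <| sum_le_sum fun j _ => by
    have := ha j
    rw [norm_smul, norm_inv, Real.norm_of_nonneg (ha j).le, one_div, ← inv_pow]
    gcongr
    exact mul_le_of_le_one_right (by positivity) (hX j)
  refine hasCommutingDilation_of_eq_sum_smul ?_ (signPOVM_nonneg hY hYnorm) (sum_signPOVM Y)
    (w := fun j ε => a j * ((ε j : ℤ) : ℝ)) (fun j => ?_) (fun j ε => ?_)
  · simp only [Fintype.card_pi, Fintype.card_units_int, prod_const, card_univ, Fintype.card_fin]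
    calc 2 ^ d ≤ 2 ^ (2 * (d - 1)) := Nat.pow_le_pow_right two_pos (by omega)
      _ = 4 ^ (d - 1) := by rw [pow_mul]; norm_num
  · simp_rw [mul_smul, ← smul_sum, sum_sign_smul_signPOVM, Y, smul_inv_smul₀ (ha j).ne']
  · simp [abs_mul, abs_of_pos (ha j), ← Int.cast_abs, Int.isUnit_iff_abs_eq.mp (ε j).isUnit]
end
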